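/- arXiv:2605.04153 — 5 statements merged into one kernel-verified Lean document; each statement's English description precedes it below -/
import Mathlib

section
/- Let d0, d1, d2, d3 ∈ ℝ and let g be the 2×2 complex matrix g = [[d0+d3, i·d1+d2], [i·d1−d2, d0−d3]]. Then g is diagonalizable over ℂ with all eigenvalues real if and only if either d3² − d2² − d1² > 0, or d1 = d2 = d3 = 0. -/
open Matrix Complex


lemma spec_iff' (d0 d1 d2 d3 : ℝ) (g : Matrix (Fin 2) (Fin 2) ℂ)
    (hg : g = !![(d0 : ℂ) + d3, I * d1 + d2; I * d1 - d2, (d0 : ℂ) - d3]) (z : ℂ) :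
    z ∈ spectrum ℂ g ↔ (z - d0)^2 = (d3:ℂ)^2 - (d2:ℂ)^2 - (d1:ℂ)^2 := by
  subst hg
  rw [spectrum.mem_iff, ← not_iff_not, not_not]
  rw [Matrix.isUnit_iff_isUnit_det, isUnit_iff_ne_zero]
  have hdet : (algebraMap ℂ (Matrix (Fin 2) (Fin 2) ℂ) z -
      !![(d0 : ℂ) + d3, I * d1 + d2; I * d1 - d2, (d0 : ℂ) - d3]).det
      = (z - d0)^2 - ((d3:ℂ)^2 - (d2:ℂ)^2 - (d1:ℂ)^2) := by
    simp [Matrix.det_fin_two, Matrix.algebraMap_eq_diagonal]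
    ring_nf
    simp [Complex.I_sq]
  rw [hdet]
  constructor
  · intro h; exact fun he => h (by rw [he]; ring)
  · intro h he; exact h (by linear_combination he)

-- conjugation preserves char det
lemma det_conj' (P D g : Matrix (Fin 2) (Fin 2) ℂ) (hP : IsUnit P)
    (hPD : g = P * D * P⁻¹) (z : ℂ) :
    (algebraMap ℂ (Matrix (Fin 2) (Fin 2) ℂ) z - g).det
      = (algebraMap ℂ (Matrix (Fin 2) (Fin 2) ℂ) z - D).det := by
  have hPdet : IsUnit P.det := (Matrix.isUnit_iff_isUnit_det P).mp hP
  have h1 : algebraMap ℂ (Matrix (Fin 2) (Fin 2) ℂ) z - g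
      = P * (algebraMap ℂ (Matrix (Fin 2) (Fin 2) ℂ) z - D) * P⁻¹ := by
    rw [hPD, Matrix.mul_sub, Matrix.sub_mul]
    congr 1
    rw [← Algebra.commutes z P, mul_assoc, Matrix.mul_nonsing_inv _ hPdet, mul_one]
  rw [h1, Matrix.det_mul, Matrix.det_mul, Matrix.det_nonsing_inv, Ring.inverse_eq_inv']
  rw [mul_comm P.det, mul_assoc, mul_inv_cancel₀ hPdet.ne_zero, mul_one]


/-- A square complex matrix is diagonalizable if it is conjugate to a
diagonal matrix by an invertible matrix. -/
def Matrix.Diagonalizable {n : Type*} [Fintype n] [DecidableEq n]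
    (M : Matrix n n ℂ) : Prop :=
  ∃ P D : Matrix n n ℂ, IsUnit P ∧ D.IsDiag ∧ M = P * D * P⁻¹

/-- The single-band Bloch dynamical matrix
`g = [[d0+d3, i·d1+d2], [i·d1−d2, d0−d3]]` (with real `d0,…,d3`) is
diagonalizable over `ℂ` with all eigenvalues real if and only if either
`d3² − d2² − d1² > 0` or `d1 = d2 = d3 = 0`. -/
theorem blochMatrix_diagonalizable_real_spectrum_iff
    (d0 d1 d2 d3 : ℝ)
    (g : Matrix (Fin 2) (Fin 2) ℂ)
    (hg : g = !![(d0 : ℂ) + d3, I * d1 + d2; I * d1 - d2, (d0 : ℂ) - d3]) :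
    (g.Diagonalizable ∧ ∀ z ∈ spectrum ℂ g, z.im = 0) ↔
      (0 < d3 ^ 2 - d2 ^ 2 - d1 ^ 2 ∨ (d1 = 0 ∧ d2 = 0 ∧ d3 = 0)) := by
  have hspec := spec_iff' d0 d1 d2 d3 g hg
  constructor
  · rintro ⟨⟨P, D, hP, hD, hPD⟩, hreal⟩
    rcases lt_trichotomy 0 (d3^2 - d2^2 - d1^2) with h | h | h
    · exact Or.inl h
    · -- Δ = 0 : must be nilpotent-free, so g = d0 • 1
      right
      have hΔc : (d3:ℂ)^2 - (d2:ℂ)^2 - (d1:ℂ)^2 = 0 := by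
        have : ((d3^2 - d2^2 - d1^2 : ℝ) : ℂ) = 0 := by rw [← h]; norm_num
        push_cast at this; linear_combination this
      -- det identity
      have hdet : ∀ z : ℂ, (z - D 0 0) * (z - D 1 1) = (z - d0)^2 := by
        intro z
        have h1 := det_conj' P D g hP hPD z
        have h2 : (algebraMap ℂ (Matrix (Fin 2) (Fin 2) ℂ) z - g).det
            = (z - d0)^2 := by
          subst hg
          simp [Matrix.det_fin_two, Matrix.algebraMap_eq_diagonal]
          ring_nf
          simp [Complex.I_sq]
          linear_combination -hΔc
        have h3 : (algebraMap ℂ (Matrix (Fin 2) (Fin 2) ℂ) z - D).det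
            = (z - D 0 0) * (z - D 1 1) := by
          have h01 : D 0 1 = 0 := hD (by decide)
          have h10 : D 1 0 = 0 := hD (by decide)
          simp [Matrix.det_fin_two, Matrix.algebraMap_eq_diagonal, h01, h10]
        rw [← h3, ← h1, h2]
      have hD00 : D 0 0 = d0 := by
        have := hdet (D 0 0)
        simp at this
        have := pow_eq_zero_iff (n := 2) (by norm_num) |>.mp this.symm
        linear_combination this
      have hD11 : D 1 1 = d0 := by
        have := hdet (D 1 1)
        simp at this
        have := pow_eq_zero_iff (n := 2) (by norm_num) |>.mp this.symm
        linear_combination this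
      have hDeq : D = (d0 : ℂ) • (1 : Matrix (Fin 2) (Fin 2) ℂ) := by
        ext i j
        fin_cases i <;> fin_cases j <;>
          simp [hD00, hD11, hD (show (0:Fin 2) ≠ 1 by decide), hD (show (1:Fin 2) ≠ 0 by decide)]
      have hPdet : IsUnit P.det := (Matrix.isUnit_iff_isUnit_det P).mp hP
      have hgid : g = (d0 : ℂ) • (1 : Matrix (Fin 2) (Fin 2) ℂ) := by
        rw [hPD, hDeq, Matrix.mul_smul, Matrix.mul_one, Matrix.smul_mul,
          Matrix.mul_nonsing_inv _ hPdet]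
      rw [hg] at hgid
      have e00 : (d0:ℂ) + d3 = d0 := by
        have := congrFun (congrFun hgid 0) 0; simpa using this
      have e01 : I * d1 + d2 = 0 := by
        have := congrFun (congrFun hgid 0) 1; simpa using this
      have hd3 : d3 = 0 := by
        have : (d3 : ℂ) = 0 := by linear_combination e00
        exact_mod_cast this
      have hd1 : d1 = 0 := by
        have := congrArg Complex.im e01; simpa using this
      have hd2 : d2 = 0 := by
        have := congrArg Complex.re e01; simpa using this
      exact ⟨hd1, hd2, hd3⟩
    · -- Δ < 0 : complex eigenvalue, contradiction
      exfalso
      set t := Real.sqrt (-(d3^2 - d2^2 - d1^2)) with ht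
      have ht2 : t^2 = -(d3^2 - d2^2 - d1^2) := Real.sq_sqrt (by linarith)
      have htpos : 0 < t := Real.sqrt_pos.mpr (by linarith)
      have hz : ((d0 : ℂ) + I * t) ∈ spectrum ℂ g := by
        rw [hspec]
        have htC : ((t:ℂ))^2 = -((d3:ℂ)^2 - (d2:ℂ)^2 - (d1:ℂ)^2) := by exact_mod_cast ht2
        linear_combination ((t:ℂ))^2 * Complex.I_sq - htC
      have := hreal _ hz
      simp at this
      exact htpos.ne' this
  · rintro (h | ⟨h1, h2, h3⟩)
    · -- Δ > 0
      set s := Real.sqrt (d3^2 - d2^2 - d1^2) with hsdef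
      have hs2 : s^2 = d3^2 - d2^2 - d1^2 := Real.sq_sqrt h.le
      have hs0 : 0 < s := Real.sqrt_pos.mpr h
      have hsC : (s:ℂ)^2 = (d3:ℂ)^2 - (d2:ℂ)^2 - (d1:ℂ)^2 := by exact_mod_cast congrArg Complex.ofReal hs2
      have hreal : ∀ z ∈ spectrum ℂ g, z.im = 0 := by
        intro z hz
        rw [hspec] at hz
        have : (z - d0 - s) * (z - d0 + s) = 0 := by linear_combination hz - hsC
        rcases mul_eq_zero.mp this with h' | h'
        · have : z = (d0:ℂ) + s := by linear_combination h'
          rw [this]; simp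
        · have : z = (d0:ℂ) - s := by linear_combination h'
          rw [this]; simp
      refine ⟨?_, hreal⟩
      by_cases hb : d1 = 0 ∧ d2 = 0
      · refine ⟨1, g, isUnit_one, ?_, by simp⟩
        intro i j hij
        fin_cases i <;> fin_cases j <;>
          first
          | exact absurd rfl hij
          | simp [hg, hb.1, hb.2]
      · have hbne : (I * d1 + d2 : ℂ) ≠ 0 := by
          intro hzero
          apply hb
          constructor
          · have := congrArg Complex.im hzero; simpa using this
          · have := congrArg Complex.re hzero; simpa using this
        have hPunit : IsUnit (!![(I * d1 + d2 : ℂ), I * d1 + d2; (s:ℂ) - d3, -(s:ℂ) - d3]) := by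
          rw [Matrix.isUnit_iff_isUnit_det, isUnit_iff_ne_zero, Matrix.det_fin_two_of]
          intro hzero
          have : (I * d1 + d2 : ℂ) * (2 * s) = 0 := by linear_combination -hzero
          rcases mul_eq_zero.mp this with h' | h'
          · exact hbne h'
          · have : (s:ℂ) = 0 := by linear_combination h'/2
            exact hs0.ne' (by exact_mod_cast this)
        refine ⟨!![(I * d1 + d2 : ℂ), I * d1 + d2; (s:ℂ) - d3, -(s:ℂ) - d3],
          !![(d0:ℂ) + s, 0; 0, (d0:ℂ) - s], hPunit, ?_, ?_⟩
        · intro i j hij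
          fin_cases i <;> fin_cases j <;>
            first
            | exact absurd rfl hij
            | simp
        · -- g = P D P⁻¹
          have hPdet : IsUnit (!![(I * d1 + d2 : ℂ), I * d1 + d2; (s:ℂ) - d3, -(s:ℂ) - d3]).det :=
            (Matrix.isUnit_iff_isUnit_det _).mp hPunit
          have key : g * !![(I * d1 + d2 : ℂ), I * d1 + d2; (s:ℂ) - d3, -(s:ℂ) - d3]
              = !![(I * d1 + d2 : ℂ), I * d1 + d2; (s:ℂ) - d3, -(s:ℂ) - d3]
                * !![(d0:ℂ) + s, 0; 0, (d0:ℂ) - s] := by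
            ext i j
            fin_cases i <;> fin_cases j <;>
            · simp only [hg, Matrix.mul_apply, Fin.sum_univ_two, Matrix.cons_val', Matrix.cons_val_zero,
                Matrix.cons_val_one, Matrix.head_cons, Matrix.head_fin_const, Matrix.empty_val',
                Matrix.cons_val_fin_one, Matrix.of_apply, Fin.zero_eta, Fin.mk_one]
              first
              | ring1
              | linear_combination (d1:ℂ)^2 * Complex.I_sq - hsC
          calc g = g * (!![(I * d1 + d2 : ℂ), I * d1 + d2; (s:ℂ) - d3, -(s:ℂ) - d3] * (!![(I * d1 + d2 : ℂ), I * d1 + d2; (s:ℂ) - d3, -(s:ℂ) - d3])⁻¹) := by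
                rw [Matrix.mul_nonsing_inv _ hPdet, mul_one]
            _ = _ := by rw [← mul_assoc, key, mul_assoc]
    · -- d1 = d2 = d3 = 0
      subst h1; subst h2; subst h3
      constructor
      · refine ⟨1, g, isUnit_one, ?_, by simp⟩
        intro i j hij
        fin_cases i <;> fin_cases j <;>
          first
          | exact absurd rfl hij
          | simp [hg]
      · intro z hz
        rw [hspec] at hz
        simp at hz
        have : z = (d0:ℂ) := by linear_combination hz
        rw [this]; simp
end

section
/- Let d0, d1, d2, d3 ∈ ℝ with E := d3² − d2² − d1² > 0 and d3 > 0, and let g be the 2×2 complex matrix g = [[d0+d3, i·d1+d2], [i·d1−d2, d0−d3]]. Then the vectors u₊ = (d3 + √E, −d2 + i·d1)ᵀ and u₋ = (−d2 − i·d1, d3 + √E)ᵀ satisfy g·u₊ = (d0 + √E)·u₊ and g·u₋ = (d0 − √E)·u₋, and their Krein norms are u₊ᴴ·σ3·u₊ = 2√E·(√E + d3) > 0 and u₋ᴴ·σ3·u₋ = −2√E·(√E + d3) < 0. In particular the two eigenvectors have opposite Krein signature with respect to σ3. -/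
open Matrix Complex

/-- For real `d0,…,d3` with `E := d3² − d2² − d1² > 0` and
`d3 > 0`, the vectors `u₊ = (d3 + √E, −d2 + i·d1)ᵀ` and
`u₋ = (−d2 − i·d1, d3 + √E)ᵀ` are eigenvectors of the Bloch dynamical matrix
`g = [[d0+d3, i·d1+d2], [i·d1−d2, d0−d3]]` with eigenvalues `d0 + √E` and
`d0 − √E` respectively, and their Krein norms with respect to
`σ3 = diag(1,−1)` are `±2√E·(√E + d3)`, which are nonzero of opposite sign:
the two eigenvectors have opposite Krein signature. -/
theorem blochMatrix_eigenvectors_opposite_krein_signature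
    (d0 d1 d2 d3 : ℝ)
    (E : ℝ) (hE : E = d3 ^ 2 - d2 ^ 2 - d1 ^ 2) (hEpos : 0 < E) (hd3 : 0 < d3)
    (g σ3 : Matrix (Fin 2) (Fin 2) ℂ)
    (hg : g = !![(d0 : ℂ) + d3, I * d1 + d2; I * d1 - d2, (d0 : ℂ) - d3])
    (hσ3 : σ3 = !![1, 0; 0, -1])
    (uplus uminus : Fin 2 → ℂ)
    (huplus : uplus = ![((d3 + Real.sqrt E : ℝ) : ℂ), -(d2 : ℂ) + I * d1])
    (huminus : uminus = ![-(d2 : ℂ) - I * d1, ((d3 + Real.sqrt E : ℝ) : ℂ)]) :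
    g.mulVec uplus = ((d0 + Real.sqrt E : ℝ) : ℂ) • uplus ∧
    g.mulVec uminus = ((d0 - Real.sqrt E : ℝ) : ℂ) • uminus ∧
    star uplus ⬝ᵥ σ3.mulVec uplus = ((2 * Real.sqrt E * (Real.sqrt E + d3) : ℝ) : ℂ) ∧
    star uminus ⬝ᵥ σ3.mulVec uminus = -((2 * Real.sqrt E * (Real.sqrt E + d3) : ℝ) : ℂ) ∧
    0 < 2 * Real.sqrt E * (Real.sqrt E + d3) := by
  have hs : Real.sqrt E ^ 2 = E := Real.sq_sqrt hEpos.le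
  have hsC : ((Real.sqrt E : ℝ) : ℂ) ^ 2 = ((d3 : ℂ))^2 - d2^2 - d1^2 := by
    rw [← Complex.ofReal_pow, hs, hE]; push_cast; ring
  have hspos : 0 < Real.sqrt E := Real.sqrt_pos.mpr hEpos
  have hI : (I : ℂ) ^ 2 = -1 := I_sq
  subst hg hσ3 huplus huminus
  refine ⟨?_, ?_, ?_, ?_, ?_⟩
  · funext i
    fin_cases i <;>
      simp [mulVec, dotProduct, Fin.sum_univ_two, Matrix.cons_val_zero, Matrix.cons_val_one] <;>
      push_cast <;> first
      | linear_combination -hsC + (d1^2:ℂ) * hI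
      | linear_combination hsC - (d1^2:ℂ) * hI
      | ring
  · funext i
    fin_cases i <;>
      simp [mulVec, dotProduct, Fin.sum_univ_two, Matrix.cons_val_zero, Matrix.cons_val_one] <;>
      push_cast <;> first
      | linear_combination -hsC + (d1^2:ℂ) * hI
      | linear_combination hsC - (d1^2:ℂ) * hI
      | ring
  · simp [mulVec, dotProduct, Fin.sum_univ_two, Complex.ext_iff, Complex.add_re, Complex.mul_re,
      Complex.mul_im]
    push_cast
    constructor <;> nlinarith [hs, hI]
  · simp [mulVec, dotProduct, Fin.sum_univ_two, Complex.ext_iff, Complex.add_re, Complex.mul_re,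
      Complex.mul_im]
    push_cast
    constructor <;> nlinarith [hs, hI]
  · positivity
end

section
/- Let d ≥ 1, let A and D be Hermitian d×d complex matrices, let B be an arbitrary d×d complex matrix, let τ3 = diag(1_d, −1_d), and define the 2d×2d block matrix g = [[A, B], [−Bᴴ, −D]]. Then (i) g is τ3-pseudo-Hermitian: gᴴ = τ3·g·τ3; and (ii) g is normal (g·gᴴ = gᴴ·g) if and only if A·B + B·D = 0. -/
open Matrix

private lemma matrix_eq_zero_of_add_self {n : Type*} (X : Matrix n n ℂ)
    (h : X + X = 0) : X = 0 := by
  have h3 : (2 : ℂ) • X = 0 := by rw [two_smul]; exact h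
  rcases smul_eq_zero.mp h3 with h | h
  · exact absurd h two_ne_zero
  · exact h

/-- Let `A`, `D` be Hermitian `d×d` complex matrices, `B`
an arbitrary `d×d` complex matrix, `τ3 = diag(1_d, −1_d)`, and
`g = [[A, B], [−Bᴴ, −D]]` the corresponding Bloch-dynamical-matrix block
form.  Then (i) `g` is `τ3`-pseudo-Hermitian, `gᴴ = τ3·g·τ3`; and (ii) `g`
is normal if and only if `A·B + B·D = 0`. -/
theorem blockBlochMatrix_pseudoHermitian_and_normal_iff
    {d : ℕ} (hd : 1 ≤ d)
    (A B D : Matrix (Fin d) (Fin d) ℂ)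
    (hA : A.IsHermitian) (hD : D.IsHermitian)
    (τ3 g : Matrix (Fin d ⊕ Fin d) (Fin d ⊕ Fin d) ℂ)
    (hτ3 : τ3 = Matrix.fromBlocks (1 : Matrix (Fin d) (Fin d) ℂ) 0 0 (-1))
    (hg : g = Matrix.fromBlocks A B (-Bᴴ) (-D)) :
    gᴴ = τ3 * g * τ3 ∧ (g * gᴴ = gᴴ * g ↔ A * B + B * D = 0) := by
  subst hτ3 hg
  have hgH : (Matrix.fromBlocks A B (-Bᴴ) (-D))ᴴ
      = Matrix.fromBlocks A (-B) Bᴴ (-D) := by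
    rw [Matrix.fromBlocks_conjTranspose]
    simp [hA.eq, hD.eq]
  constructor
  · rw [hgH]
    simp [Matrix.fromBlocks_multiply]
  · rw [hgH]
    rw [Matrix.fromBlocks_multiply, Matrix.fromBlocks_multiply, Matrix.fromBlocks_inj]
    simp only [mul_neg, neg_mul, neg_neg, neg_zero, mul_zero, add_zero,
      conjTranspose_conjTranspose]
    constructor
    · rintro ⟨-, h12, -, -⟩
      refine matrix_eq_zero_of_add_self _ ?_
      nth_rewrite 1 [← h12]
      abel
    · intro h
      have hH : Bᴴ * A + D * Bᴴ = 0 := by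
        have := congrArg Matrix.conjTranspose h
        simpa [Matrix.conjTranspose_mul, hA.eq, hD.eq, add_comm] using this
      refine ⟨trivial, ?_, ?_, trivial⟩
      · rw [← neg_add, h, neg_zero]
      · rw [← neg_add, hH, neg_zero]
end

section
/- Let R ∈ ℕ and let d1, d2, d3 : ℝ → ℝ be real-valued trigonometric polynomials of degree at most R, i.e. d_j(k) = Σ_{r=−R}^{R} c_{j,r}·e^{i k r} with c_{j,−r} = conj(c_{j,r}). Assume that d3(k)² − d2(k)² − d1(k)² > 0 for all k ∈ ℝ, and set 𝓔(k) := √(d3(k)² − d2(k)² − d1(k)²). Then there exist constants C > 0 and η > 0 such that for every integer r and for each of the functions f ∈ { (d3−d2)/𝓔, (d3+d2)/𝓔, d1/𝓔 }, the Fourier coefficient satisfies |(1/2π)·∫_{−π}^{π} f(k)·e^{−i k r} dk| ≤ C·e^{−η·|r|}. That is, when the Krein gap is open, all real-space correlation functions of the quasiparticle vacuum of a single-band translationally invariant quadratic bosonic Hamiltonian with finite-range couplings are exponentially bounded. -/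
open Real Complex

private lemma contour_shift (f : ℂ → ℂ) (y0 : ℝ)
    (hd : DifferentiableOn ℂ f (Set.uIcc (-π) π ×ℂ Set.uIcc (0:ℝ) y0))
    (hper : ∀ y : ℝ, f (↑(π:ℝ) + ↑y * Complex.I) = f (↑(-π:ℝ) + ↑y * Complex.I)) :
    (∫ x in (-π:ℝ)..π, f x) = ∫ x in (-π:ℝ)..π, f (x + y0 * Complex.I) := by
  have h := Complex.integral_boundary_rect_eq_zero_of_differentiableOn f
      (⟨-π, 0⟩ : ℂ) (⟨π, y0⟩ : ℂ) (by simpa using hd)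
  simp only [Complex.ofReal_zero, zero_mul, add_zero] at h
  have hv : (∫ y in (0:ℝ)..y0, f (↑(π:ℝ) + ↑y * Complex.I))
      = ∫ y in (0:ℝ)..y0, f (↑(-π:ℝ) + ↑y * Complex.I) :=
    intervalIntegral.integral_congr fun y _ => hper y
  rw [hv] at h
  rw [add_sub_cancel_right] at h
  exact sub_eq_zero.mp h

private lemma key_decay (N F : ℂ → ℂ) (hN : Differentiable ℂ N) (hF : Differentiable ℂ F)
    (hNper : ∀ z : ℂ, N (z + 2 * (π : ℝ)) = N z) (hFper : ∀ z : ℂ, F (z + 2 * (π : ℝ)) = F z)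
    (m δ B : ℝ) (hm : 0 < m) (hδ : 0 < δ)
    (hFre : ∀ z : ℂ, z.re ∈ Set.Icc (-π) π → |z.im| ≤ δ → m / 2 < (F z).re)
    (hB : ∀ z : ℂ, z.re ∈ Set.Icc (-π) π → |z.im| ≤ δ → ‖N z‖ ≤ B)
    (g : ℝ → ℝ) (hg : ∀ k : ℝ, (g k : ℂ) = N k * F k ^ (-(1/2) : ℂ)) (r : ℤ) :
    ‖(1 / (2 * (π : ℂ))) * ∫ k in (-π:ℝ)..π, (g k : ℂ) * Complex.exp (-Complex.I * k * r)‖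
      ≤ B * (Real.sqrt (m/2))⁻¹ * Real.exp (-δ * |(r:ℝ)|) := by
  have hpi : (-π : ℝ) ≤ π := by linarith [Real.pi_pos]
  set G : ℂ → ℂ := fun z => N z * F z ^ (-(1/2) : ℂ) * Complex.exp (-Complex.I * z * r) with hG
  set y0 : ℝ := if 0 ≤ r then -δ else δ with hy0
  have hy0cases : y0 = -δ ∨ y0 = δ := by rw [hy0]; split_ifs <;> tauto
  have hy0abs : |y0| = δ := by rcases hy0cases with h | h <;> rw [h] <;> simp [abs_of_pos hδ]
  have hy0r : y0 * (r : ℝ) = -δ * |(r : ℝ)| := by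
    rcases le_or_gt 0 r with h | h
    · have habs : |(r : ℝ)| = (r : ℝ) := abs_of_nonneg (by exact_mod_cast h)
      rw [hy0, if_pos h, habs]; try ring
    · have habs : |(r : ℝ)| = -(r : ℝ) := abs_of_neg (by exact_mod_cast h)
      rw [hy0, if_neg (not_le.mpr h), habs]; ring
  have him : ∀ t ∈ Set.uIcc (0:ℝ) y0, |t| ≤ δ := by
    intro t ht
    rcases hy0cases with h | h <;> rw [h] at ht
    · rw [Set.uIcc_of_ge (by linarith : -δ ≤ (0:ℝ))] at ht
      rw [abs_le]; exact ⟨ht.1, le_trans ht.2 hδ.le⟩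
    · rw [Set.uIcc_of_le hδ.le] at ht
      rw [abs_le]; exact ⟨le_trans (by linarith) ht.1, ht.2⟩
  have hrect : ∀ z ∈ Set.uIcc (-π) π ×ℂ Set.uIcc (0:ℝ) y0,
      z.re ∈ Set.Icc (-π) π ∧ |z.im| ≤ δ := by
    intro z hz
    rw [Complex.mem_reProdIm] at hz
    exact ⟨by rw [Set.uIcc_of_le hpi] at hz; exact hz.1, him _ hz.2⟩
  have hdiff : DifferentiableOn ℂ G (Set.uIcc (-π) π ×ℂ Set.uIcc (0:ℝ) y0) := by
    intro z hz
    obtain ⟨hre, himz⟩ := hrect z hz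
    have hslit : F z ∈ Complex.slitPlane :=
      Or.inl (lt_trans (by positivity) (hFre z hre himz))
    have h1 : DifferentiableAt ℂ (fun z => F z ^ (-(1/2) : ℂ)) z :=
      (hF z).cpow (differentiableAt_const _) hslit
    have h2 : DifferentiableAt ℂ (fun z => Complex.exp (-Complex.I * z * (r:ℂ))) z :=
      (((differentiable_id.const_mul (-Complex.I)).mul_const (r:ℂ)).cexp) z
    exact (((hN z).mul h1).mul h2).differentiableWithinAt
  have hGper : ∀ y : ℝ, G (↑(π:ℝ) + ↑y * Complex.I) = G (↑(-π:ℝ) + ↑y * Complex.I) := by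
    intro y
    have hzz : ((π:ℝ) : ℂ) + (y:ℂ) * Complex.I = (((-π:ℝ) : ℂ) + (y:ℂ) * Complex.I) + 2 * (π:ℝ) := by
      push_cast; ring
    rw [hzz]
    set z := ((-π:ℝ) : ℂ) + (y:ℂ) * Complex.I with hz
    show N _ * F (z + 2 * (π:ℝ)) ^ (-(1/2) : ℂ) * _ = _
    rw [hNper, hFper]
    congr 1
    have harg : -Complex.I * (z + 2 * ((π:ℝ):ℂ)) * (r:ℂ)
        = -Complex.I * z * (r:ℂ) + ((-r : ℤ) : ℂ) * (2 * (π:ℝ) * Complex.I) := by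
      push_cast; ring
    rw [harg, Complex.exp_add, Complex.exp_int_mul_two_pi_mul_I, mul_one]
  have hshift := contour_shift G y0 hdiff hGper
  have hint : (∫ k in (-π:ℝ)..π, (g k : ℂ) * Complex.exp (-Complex.I * k * r))
      = ∫ x in (-π:ℝ)..π, G x :=
    intervalIntegral.integral_congr fun k _ => by rw [hg k]
  have hC0 : 0 ≤ B := le_trans (norm_nonneg (N 0))
    (hB 0 (by constructor <;> simp <;> linarith) (by simp [hδ.le]))
  have hbound : ∀ x ∈ Set.uIoc (-π:ℝ) π,
      ‖G (↑x + ↑y0 * Complex.I)‖ ≤ B * (Real.sqrt (m/2))⁻¹ * Real.exp (y0 * r) := by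
    intro x hx
    rw [Set.uIoc_of_le hpi] at hx
    set z : ℂ := ↑x + ↑y0 * Complex.I with hzdef
    have hzre : z.re ∈ Set.Icc (-π) π := by
      simp only [hzdef, Complex.add_re, Complex.ofReal_re, Complex.mul_re, Complex.ofReal_im,
        Complex.I_re, Complex.I_im]
      norm_num
      exact ⟨hx.1.le, hx.2⟩
    have hzim : |z.im| ≤ δ := by
      simp only [hzdef, Complex.add_im, Complex.ofReal_im, Complex.mul_im, Complex.ofReal_re,
        Complex.I_im, Complex.I_re]
      norm_num
      rw [hy0abs]
    have hFz : m / 2 < (F z).re := hFre z hzre hzim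
    have hFne : F z ≠ 0 := by
      intro h0; rw [h0] at hFz; simp at hFz; linarith
    have bF : ‖F z ^ (-(1/2) : ℂ)‖ ≤ (Real.sqrt (m/2))⁻¹ := by
      rw [Complex.norm_cpow_of_ne_zero hFne]
      have : ((-(1/2) : ℂ)).im = 0 := by norm_num
      rw [this]
      have : ((-(1/2) : ℂ)).re = -(1/2) := by norm_num
      rw [this]
      simp only [mul_zero, Real.exp_zero, div_one]
      have h1 : m/2 ≤ ‖F z‖ := le_trans hFz.le (Complex.re_le_norm _)
      calc ‖F z‖ ^ (-(1/2) : ℝ) ≤ (m/2) ^ (-(1/2) : ℝ) :=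
            Real.rpow_le_rpow_of_nonpos (by linarith) h1 (by norm_num)
        _ = (Real.sqrt (m/2))⁻¹ := by
            rw [Real.rpow_neg (by linarith), Real.sqrt_eq_rpow]
    have bE : ‖Complex.exp (-Complex.I * z * (r:ℂ))‖ = Real.exp (y0 * r) := by
      rw [Complex.norm_exp]
      congr 1
      have : -Complex.I * z * (r:ℂ) = Complex.ofReal (y0 * r) + Complex.ofReal (-(x * r)) * Complex.I := by
        rw [hzdef, Complex.ext_iff]
        constructor <;> simp [Complex.mul_re, Complex.mul_im]
      rw [this]
      simp
    calc ‖G z‖ = ‖N z‖ * ‖F z ^ (-(1/2) : ℂ)‖ * ‖Complex.exp (-Complex.I * z * (r:ℂ))‖ := by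
          simp only [hG, norm_mul]
      _ ≤ B * (Real.sqrt (m/2))⁻¹ * Real.exp (y0 * r) := by
          rw [bE]
          have := mul_le_mul (hB z hzre hzim) bF (norm_nonneg _) hC0
          exact mul_le_mul_of_nonneg_right this (Real.exp_nonneg _)
  have hIbd := intervalIntegral.norm_integral_le_of_norm_le_const hbound
  have habs2 : |π - (-π)| = 2 * π := by rw [abs_of_pos (by linarith [Real.pi_pos])]; ring
  rw [habs2] at hIbd
  rw [norm_mul, hint, hshift]
  have hnorm1 : ‖(1 / (2 * (π : ℂ)))‖ = (2 * π)⁻¹ := by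
    simp [abs_of_pos Real.pi_pos]
  rw [hnorm1]
  calc (2*π)⁻¹ * ‖∫ x in (-π:ℝ)..π, G (↑x + ↑y0 * Complex.I)‖
      ≤ (2*π)⁻¹ * (B * (Real.sqrt (m/2))⁻¹ * Real.exp (y0 * r) * (2 * π)) := by
        gcongr
    _ = B * (Real.sqrt (m/2))⁻¹ * Real.exp (y0 * r) := by
        field_simp
    _ = B * (Real.sqrt (m/2))⁻¹ * Real.exp (-δ * |(r:ℝ)|) := by rw [hy0r]

/-- Let `d1, d2, d3 : ℝ → ℝ` be real-valued trigonometric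
polynomials of degree at most `R` (with coefficients `c_{j,r}` satisfying
`c_{j,−r} = conj(c_{j,r})`).  If the Krein gap is open, i.e.
`d3(k)² − d2(k)² − d1(k)² > 0` for all `k`, and
`𝓔(k) := √(d3(k)² − d2(k)² − d1(k)²)`, then there are constants `C, η > 0`
such that for every integer `r` and each entry
`f ∈ {(d3−d2)/𝓔, (d3+d2)/𝓔, d1/𝓔}` of the quasiparticle-vacuum covariance
matrix, the Fourier coefficient `(1/2π)·∫_{−π}^{π} f(k)·e^{−ikr} dk` is
bounded by `C·e^{−η·|r|}`:  all real-space correlations of the quasiparticle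
vacuum are exponentially bounded. -/
theorem single_band_qpv_correlations_exponentially_bounded
    (R : ℕ) (c1 c2 c3 : ℤ → ℂ)
    (hc1 : ∀ r : ℤ, c1 (-r) = (starRingEnd ℂ) (c1 r))
    (hc2 : ∀ r : ℤ, c2 (-r) = (starRingEnd ℂ) (c2 r))
    (hc3 : ∀ r : ℤ, c3 (-r) = (starRingEnd ℂ) (c3 r))
    (d1 d2 d3 : ℝ → ℝ)
    (hd1 : ∀ k : ℝ, (d1 k : ℂ) =
      ∑ r ∈ Finset.Icc (-(R : ℤ)) (R : ℤ), c1 r * Complex.exp (Complex.I * k * r))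
    (hd2 : ∀ k : ℝ, (d2 k : ℂ) =
      ∑ r ∈ Finset.Icc (-(R : ℤ)) (R : ℤ), c2 r * Complex.exp (Complex.I * k * r))
    (hd3 : ∀ k : ℝ, (d3 k : ℂ) =
      ∑ r ∈ Finset.Icc (-(R : ℤ)) (R : ℤ), c3 r * Complex.exp (Complex.I * k * r))
    (hgap : ∀ k : ℝ, 0 < d3 k ^ 2 - d2 k ^ 2 - d1 k ^ 2)
    (𝓔 : ℝ → ℝ)
    (h𝓔 : ∀ k : ℝ, 𝓔 k = Real.sqrt (d3 k ^ 2 - d2 k ^ 2 - d1 k ^ 2)) :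
    ∃ C > 0, ∃ η > 0, ∀ r : ℤ,
      ∀ f ∈ ({(fun k => (d3 k - d2 k) / 𝓔 k),
              (fun k => (d3 k + d2 k) / 𝓔 k),
              (fun k => d1 k / 𝓔 k)} : Set (ℝ → ℝ)),
        ‖(1 / (2 * (π : ℂ))) *
            ∫ k in (-π : ℝ)..π, (f k : ℂ) * Complex.exp (-Complex.I * k * r)‖
          ≤ C * Real.exp (-η * |(r : ℝ)|) := by
  classical
  set D1 : ℂ → ℂ := fun z => ∑ s ∈ Finset.Icc (-(R:ℤ)) (R:ℤ), c1 s * Complex.exp (Complex.I * z * s) with hD1def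
  set D2 : ℂ → ℂ := fun z => ∑ s ∈ Finset.Icc (-(R:ℤ)) (R:ℤ), c2 s * Complex.exp (Complex.I * z * s) with hD2def
  set D3 : ℂ → ℂ := fun z => ∑ s ∈ Finset.Icc (-(R:ℤ)) (R:ℤ), c3 s * Complex.exp (Complex.I * z * s) with hD3def
  set F : ℂ → ℂ := fun z => D3 z ^ 2 - D2 z ^ 2 - D1 z ^ 2 with hFdef
  have hD1k : ∀ k : ℝ, D1 (k:ℂ) = (d1 k : ℂ) := fun k => (hd1 k).symm
  have hD2k : ∀ k : ℝ, D2 (k:ℂ) = (d2 k : ℂ) := fun k => (hd2 k).symm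
  have hD3k : ∀ k : ℝ, D3 (k:ℂ) = (d3 k : ℂ) := fun k => (hd3 k).symm
  -- differentiability
  have hDdiff : ∀ c : ℤ → ℂ, Differentiable ℂ
      (fun z : ℂ => ∑ s ∈ Finset.Icc (-(R:ℤ)) (R:ℤ), c s * Complex.exp (Complex.I * z * s)) := by
    intro c
    apply Differentiable.fun_sum
    intro s _
    exact (differentiable_const _).mul (((differentiable_id.const_mul Complex.I).mul_const _).cexp)
  have hD1diff : Differentiable ℂ D1 := hDdiff c1
  have hD2diff : Differentiable ℂ D2 := hDdiff c2
  have hD3diff : Differentiable ℂ D3 := hDdiff c3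
  have hFdiff : Differentiable ℂ F :=
    ((hD3diff.pow 2).sub (hD2diff.pow 2)).sub (hD1diff.pow 2)
  -- periodicity
  have hDper : ∀ (c : ℤ → ℂ) (z : ℂ),
      (∑ s ∈ Finset.Icc (-(R:ℤ)) (R:ℤ), c s * Complex.exp (Complex.I * (z + 2*(π:ℝ)) * s))
        = ∑ s ∈ Finset.Icc (-(R:ℤ)) (R:ℤ), c s * Complex.exp (Complex.I * z * s) := by
    intro c z
    apply Finset.sum_congr rfl
    intro s _
    congr 1
    have harg : Complex.I * (z + 2*((π:ℝ):ℂ)) * (s:ℂ)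
        = Complex.I * z * (s:ℂ) + ((s : ℤ) : ℂ) * (2 * (π:ℝ) * Complex.I) := by
      push_cast; ring
    rw [harg, Complex.exp_add, Complex.exp_int_mul_two_pi_mul_I, mul_one]
  have hD1per : ∀ z : ℂ, D1 (z + 2*(π:ℝ)) = D1 z := hDper c1
  have hD2per : ∀ z : ℂ, D2 (z + 2*(π:ℝ)) = D2 z := hDper c2
  have hD3per : ∀ z : ℂ, D3 (z + 2*(π:ℝ)) = D3 z := hDper c3
  have hFper : ∀ z : ℂ, F (z + 2*(π:ℝ)) = F z := by
    intro z; rw [hFdef]; simp only [hD1per z, hD2per z, hD3per z]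
  -- real continuity
  have hd1cont : Continuous d1 := by
    have : d1 = fun k : ℝ => (D1 (k:ℂ)).re := by
      funext k; rw [hD1k k, Complex.ofReal_re]
    rw [this]
    exact Complex.continuous_re.comp (hD1diff.continuous.comp Complex.continuous_ofReal)
  have hd2cont : Continuous d2 := by
    have : d2 = fun k : ℝ => (D2 (k:ℂ)).re := by
      funext k; rw [hD2k k, Complex.ofReal_re]
    rw [this]
    exact Complex.continuous_re.comp (hD2diff.continuous.comp Complex.continuous_ofReal)
  have hd3cont : Continuous d3 := by
    have : d3 = fun k : ℝ => (D3 (k:ℂ)).re := by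
      funext k; rw [hD3k k, Complex.ofReal_re]
    rw [this]
    exact Complex.continuous_re.comp (hD3diff.continuous.comp Complex.continuous_ofReal)
  set E2 : ℝ → ℝ := fun k => d3 k ^ 2 - d2 k ^ 2 - d1 k ^ 2 with hE2def
  have hE2cont : Continuous E2 := ((hd3cont.pow 2).sub (hd2cont.pow 2)).sub (hd1cont.pow 2)
  have hFk : ∀ k : ℝ, F (k:ℂ) = ((E2 k : ℝ) : ℂ) := by
    intro k
    rw [hFdef]
    show D3 (k:ℂ) ^ 2 - D2 (k:ℂ) ^ 2 - D1 (k:ℂ) ^ 2 = _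
    rw [hD1k, hD2k, hD3k, hE2def]
    push_cast
    ring
  have hpi : (-π : ℝ) ≤ π := by linarith [Real.pi_pos]
  -- minimum m of E2 on [-π, π]
  obtain ⟨k0, hk0mem, hk0min'⟩ := isCompact_Icc.exists_isMinOn
    (Set.nonempty_Icc.mpr hpi) hE2cont.continuousOn
  have hk0min := isMinOn_iff.mp hk0min'
  set m : ℝ := E2 k0 with hmdef
  have hm : 0 < m := hgap k0
  clear_value m
  -- uniform continuity to get the strip width δ
  set ι : ℝ × ℝ → ℂ := fun p => (p.1 : ℂ) + (p.2 : ℂ) * Complex.I with hιdef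
  have hιcont : Continuous ι := by
    apply Continuous.add
    · exact Complex.continuous_ofReal.comp continuous_fst
    · exact (Complex.continuous_ofReal.comp continuous_snd).mul continuous_const
  set φ : ℝ × ℝ → ℝ := fun p => (F (ι p)).re with hφdef
  have hφcont : Continuous φ := Complex.continuous_re.comp (hFdiff.continuous.comp hιcont)
  set K : Set (ℝ × ℝ) := Set.Icc (-π) π ×ˢ Set.Icc (-1:ℝ) 1 with hKdef
  have hK : IsCompact K := isCompact_Icc.prod isCompact_Icc
  have hunif := hK.uniformContinuousOn_of_continuous hφcont.continuousOn
  rw [Metric.uniformContinuousOn_iff] at hunif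
  obtain ⟨δ0, hδ0, hδ0prop⟩ := hunif (m/2) (by positivity)
  set δ : ℝ := min (δ0/2) 1 with hδdef
  have hδpos : 0 < δ := lt_min (by linarith) one_pos
  have hδle1 : δ ≤ 1 := min_le_right _ _
  have hδltδ0 : δ < δ0 := lt_of_le_of_lt (min_le_left _ _) (by linarith)
  have hFre : ∀ z : ℂ, z.re ∈ Set.Icc (-π) π → |z.im| ≤ δ → m / 2 < (F z).re := by
    intro z hre him
    have h1 : ((z.re, z.im) : ℝ × ℝ) ∈ K := by
      refine ⟨hre, ?_⟩
      rw [Set.mem_Icc]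
      have := abs_le.mp (le_trans him hδle1)
      exact this
    have h2 : ((z.re, 0) : ℝ × ℝ) ∈ K := by
      refine ⟨hre, ?_⟩
      rw [Set.mem_Icc]; constructor <;> norm_num
    have hdist : dist ((z.re, z.im) : ℝ × ℝ) ((z.re, 0) : ℝ × ℝ) < δ0 := by
      rw [Prod.dist_eq]
      simp only [dist_self, Real.dist_eq, sub_zero]
      exact max_lt (by linarith) (lt_of_le_of_lt him hδltδ0)
    have h3 := hδ0prop _ h1 _ h2 hdist
    rw [Real.dist_eq] at h3
    have hφ1 : φ (z.re, z.im) = (F z).re := by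
      rw [hφdef]
      show (F (ι (z.re, z.im))).re = (F z).re
      rw [hιdef]
      show (F ((z.re : ℂ) + (z.im : ℂ) * Complex.I)).re = _
      rw [Complex.re_add_im]
    have hφ2 : φ (z.re, 0) = E2 z.re := by
      rw [hφdef]
      show (F (ι (z.re, 0))).re = E2 z.re
      rw [hιdef]
      show (F ((z.re : ℂ) + ((0:ℝ) : ℂ) * Complex.I)).re = E2 z.re
      rw [Complex.ofReal_zero, zero_mul, add_zero, hFk, Complex.ofReal_re]
    rw [hφ1, hφ2] at h3
    have h4 := abs_lt.mp h3
    have h5 : m ≤ E2 z.re := hk0min z.re hre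
    have h6 : -(m/2) < (F z).re - E2 z.re := h4.1
    have key : ∀ a b : ℝ, m ≤ b → -(m/2) < a - b → m / 2 < a := by
      intro a b hb hab; linarith
    exact key _ _ h5 h6
  -- bound B on the numerators
  set ψ : ℝ × ℝ → ℝ := fun p => ‖D1 (ι p)‖ + ‖D2 (ι p)‖ + ‖D3 (ι p)‖ with hψdef
  have hψcont : Continuous ψ := by
    apply Continuous.add
    apply Continuous.add
    · exact continuous_norm.comp (hD1diff.continuous.comp hιcont)
    · exact continuous_norm.comp (hD2diff.continuous.comp hιcont)
    · exact continuous_norm.comp (hD3diff.continuous.comp hιcont)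
  obtain ⟨p0, hp0mem, hp0max'⟩ := hK.exists_isMaxOn
    ⟨(-π, 0), ⟨Set.left_mem_Icc.mpr hpi, by rw [Set.mem_Icc]; constructor <;> norm_num⟩⟩
    hψcont.continuousOn
  have hp0max := isMaxOn_iff.mp hp0max'
  set B : ℝ := ψ p0 with hBdef
  have hBnn : 0 ≤ B :=
    add_nonneg (add_nonneg (norm_nonneg _) (norm_nonneg _)) (norm_nonneg _)
  have hDb : ∀ z : ℂ, z.re ∈ Set.Icc (-π) π → |z.im| ≤ δ →
      ‖D1 z‖ + ‖D2 z‖ + ‖D3 z‖ ≤ B := by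
    intro z hre him
    have h1 : ((z.re, z.im) : ℝ × ℝ) ∈ K := by
      refine ⟨hre, ?_⟩
      rw [Set.mem_Icc]
      exact abs_le.mp (le_trans him hδle1)
    have h2 := hp0max _ h1
    have hz : ι (z.re, z.im) = z := by
      rw [hιdef]; exact Complex.re_add_im z
    rw [hψdef] at h2
    simp only [hz] at h2
    exact h2
  -- the cpow identity on the real line
  have hcp : ∀ k : ℝ, F (k:ℂ) ^ (-(1/2) : ℂ) = (((𝓔 k)⁻¹ : ℝ) : ℂ) := by
    intro k
    have hE2pos : 0 < E2 k := hgap k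
    rw [hFk k]
    have hexp : (-(1/2) : ℂ) = ((-(1/2) : ℝ) : ℂ) := by norm_num
    rw [hexp, ← Complex.ofReal_cpow hE2pos.le]
    congr 1
    rw [h𝓔 k, Real.rpow_neg hE2pos.le, Real.sqrt_eq_rpow]
  have hEpos : ∀ k : ℝ, 0 < 𝓔 k := by
    intro k; rw [h𝓔 k]; exact Real.sqrt_pos.mpr (hgap k)
  -- assemble
  refine ⟨(2*B+1) * (Real.sqrt (m/2))⁻¹, ?_, δ, hδpos, ?_⟩
  · have h1 : 0 < (Real.sqrt (m/2))⁻¹ := inv_pos.mpr (Real.sqrt_pos.mpr (half_pos hm))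
    have h2 : 0 < 2*B+1 := by linarith [hBnn]
    exact mul_pos h2 h1
  intro r f hf
  simp only [Set.mem_insert_iff, Set.mem_singleton_iff] at hf
  rcases hf with hf | hf | hf <;> subst hf
  · exact key_decay (fun z => D3 z - D2 z) F (hD3diff.sub hD2diff) hFdiff
      (fun z => by simp only [hD3per z, hD2per z]) hFper m δ (2*B+1) hm hδpos hFre
      (fun z hre him => by
        have h := hDb z hre him
        calc ‖D3 z - D2 z‖ ≤ ‖D3 z‖ + ‖D2 z‖ := norm_sub_le _ _
          _ ≤ 2*B+1 := by
            have := norm_nonneg (D1 z)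
            linarith)
      (fun k => (d3 k - d2 k) / 𝓔 k)
      (fun k => by
        show (((d3 k - d2 k) / 𝓔 k : ℝ) : ℂ) = (D3 (k:ℂ) - D2 (k:ℂ)) * F (k:ℂ) ^ (-(1/2) : ℂ)
        rw [hcp k, hD3k, hD2k]
        push_cast
        ring) r
  · exact key_decay (fun z => D3 z + D2 z) F (hD3diff.add hD2diff) hFdiff
      (fun z => by simp only [hD3per z, hD2per z]) hFper m δ (2*B+1) hm hδpos hFre
      (fun z hre him => by
        have h := hDb z hre him
        calc ‖D3 z + D2 z‖ ≤ ‖D3 z‖ + ‖D2 z‖ := norm_add_le _ _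
          _ ≤ 2*B+1 := by
            have := norm_nonneg (D1 z)
            linarith)
      (fun k => (d3 k + d2 k) / 𝓔 k)
      (fun k => by
        show (((d3 k + d2 k) / 𝓔 k : ℝ) : ℂ) = (D3 (k:ℂ) + D2 (k:ℂ)) * F (k:ℂ) ^ (-(1/2) : ℂ)
        rw [hcp k, hD3k, hD2k]
        push_cast
        ring) r
  · exact key_decay D1 F hD1diff hFdiff hD1per hFper m δ (2*B+1) hm hδpos hFre
      (fun z hre him => by
        have h := hDb z hre him
        calc ‖D1 z‖ ≤ ‖D1 z‖ := le_rfl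
          _ ≤ 2*B+1 := by
            have := norm_nonneg (D2 z)
            have := norm_nonneg (D3 z)
            linarith)
      (fun k => d1 k / 𝓔 k)
      (fun k => by
        show ((d1 k / 𝓔 k : ℝ) : ℂ) = D1 (k:ℂ) * F (k:ℂ) ^ (-(1/2) : ℂ)
        rw [hcp k, hD1k]
        push_cast
        ring) r
end

section
/- Let Ω > 0, let J ≥ Δ ≥ 0, and let s ∈ [0,1]. Then: (i) Ω²(1−s)² − s²·Δ²·cos²(k) ≥ 0 holds for every k ∈ ℝ if and only if s·(Ω+Δ) ≤ Ω (i.e. s ≤ s₂ := 1/(1+Δ/Ω)); and (ii) Ω(1−s) ≥ s·√(J²·sin²(k) + Δ²·cos²(k)) holds for every k ∈ ℝ if and only if s·(Ω+J) ≤ Ω (i.e. s ≤ s₁ := 1/(1+J/Ω)). Thus the interpolation model is dynamically stable exactly for s ≤ s₂ and thermodynamically stable exactly for s ≤ s₁, with s₁ ≤ s₂. -/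
open Real

lemma aux_threshold (Ω X s : ℝ) (hΩ : 0 < Ω) (hX : 0 ≤ X) :
    s * (Ω + X) ≤ Ω ↔ s ≤ 1 / (1 + X / Ω) := by
  have h : 1 + X / Ω = (Ω + X) / Ω := by field_simp
  rw [h, one_div_div, le_div_iff₀ (by positivity)]

/-- For the interpolation model with `Ω > 0`,
`J ≥ Δ ≥ 0` and `s ∈ [0,1]`:
(i) dynamical stability, `Ω²(1−s)² − s²Δ²cos²k ≥ 0` for all `k`, holds iff
`s·(Ω+Δ) ≤ Ω`;
(ii) thermodynamic stability, `s·√(J²sin²k + Δ²cos²k) ≤ Ω(1−s)` for all `k`,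
holds iff `s·(Ω+J) ≤ Ω`.
Moreover `s₁ := 1/(1+J/Ω) ≤ s₂ := 1/(1+Δ/Ω)`, so the model is dynamically
stable exactly for `s ≤ s₂` and thermodynamically stable exactly for
`s ≤ s₁`. -/
theorem interpolation_model_stability_thresholds
    (Ω J Δ s : ℝ) (hΩ : 0 < Ω) (hJΔ : Δ ≤ J) (hΔ : 0 ≤ Δ)
    (hs : s ∈ Set.Icc (0 : ℝ) 1) :
    ((∀ k : ℝ, 0 ≤ Ω ^ 2 * (1 - s) ^ 2 - s ^ 2 * Δ ^ 2 * Real.cos k ^ 2) ↔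
        s * (Ω + Δ) ≤ Ω) ∧
    ((∀ k : ℝ, s * Real.sqrt (J ^ 2 * Real.sin k ^ 2 + Δ ^ 2 * Real.cos k ^ 2)
        ≤ Ω * (1 - s)) ↔ s * (Ω + J) ≤ Ω) ∧
    (s * (Ω + Δ) ≤ Ω ↔ s ≤ 1 / (1 + Δ / Ω)) ∧
    (s * (Ω + J) ≤ Ω ↔ s ≤ 1 / (1 + J / Ω)) ∧
    1 / (1 + J / Ω) ≤ 1 / (1 + Δ / Ω) := by
  obtain ⟨hs0, hs1⟩ := hs
  have hJ : 0 ≤ J := le_trans hΔ hJΔ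
  have h1s : 0 ≤ Ω * (1 - s) := by nlinarith
  refine ⟨?_, ?_, aux_threshold Ω Δ s hΩ hΔ, aux_threshold Ω J s hΩ hJ, ?_⟩
  · constructor
    · intro h
      have h0 := h 0
      rw [Real.cos_zero] at h0
      nlinarith [mul_nonneg hs0 hΔ]
    · intro h k
      have hc : Real.cos k ^ 2 ≤ 1 := Real.cos_sq_le_one k
      have hsd : s * Δ ≤ Ω * (1 - s) := by nlinarith
      nlinarith [mul_le_mul hsd hsd (mul_nonneg hs0 hΔ) h1s, mul_nonneg (mul_nonneg hs0 hΔ) (mul_nonneg hs0 hΔ), sq_nonneg (Real.cos k)]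
  · constructor
    · intro h
      have h0 := h (π / 2)
      rw [Real.sin_pi_div_two, Real.cos_pi_div_two] at h0
      simp only [one_pow, mul_one, ne_eq, OfNat.ofNat_ne_zero, not_false_eq_true,
        zero_pow, mul_zero, add_zero] at h0
      rw [Real.sqrt_sq hJ] at h0
      nlinarith
    · intro h k
      have hs2 : Real.sin k ^ 2 + Real.cos k ^ 2 = 1 := Real.sin_sq_add_cos_sq k
      have hle : J ^ 2 * Real.sin k ^ 2 + Δ ^ 2 * Real.cos k ^ 2 ≤ J ^ 2 := by
        nlinarith [sq_nonneg (Real.cos k), mul_le_mul hJΔ hJΔ hΔ hJ]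
      have : Real.sqrt (J ^ 2 * Real.sin k ^ 2 + Δ ^ 2 * Real.cos k ^ 2) ≤ J := by
        calc Real.sqrt (J ^ 2 * Real.sin k ^ 2 + Δ ^ 2 * Real.cos k ^ 2)
            ≤ Real.sqrt (J ^ 2) := Real.sqrt_le_sqrt hle
          _ = J := Real.sqrt_sq hJ
      calc s * Real.sqrt (J ^ 2 * Real.sin k ^ 2 + Δ ^ 2 * Real.cos k ^ 2)
          ≤ s * J := by nlinarith [Real.sqrt_nonneg (J ^ 2 * Real.sin k ^ 2 + Δ ^ 2 * Real.cos k ^ 2)]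
        _ ≤ Ω * (1 - s) := by nlinarith
  · apply one_div_le_one_div_of_le
    · positivity
    · have := div_le_div_of_nonneg_right (c := Ω) hΔ
      gcongr
end
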